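/- Let η : (0,∞) → (0,∞) be an increasing homeomorphism and 1 ≤ d ≤ D. There is ε' = ε'(η,d) > 0 such that if Q is a dyadic cube in R^d and f : Q → R^D is η-quasisymmetric with ω_f(Q) < ε', then the infimum defining ω_f(Q) is attained: there exists an affine map A : R^d → R^D with A' ≠ 0 satisfying ω_f(Q)² = ⨍_Q (|f − A| / (|A'| diam Q))². -/

import Mathlib

open MeasureTheory Metric Set

/-- The axis-parallel cube with corner `a` and side length `l`. -/
def cube {d : ℕ} (a : Fin d → ℝ) (l : ℝ) : Set (Fin d → ℝ) :=
  Set.Icc a (fun i => a i + l)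

/-- The dyadic cube with index `p = (n, j)`. -/
def dc {d : ℕ} (p : ℤ × (Fin d → ℤ)) : Set (Fin d → ℝ) :=
  cube (fun i => (2 : ℝ) ^ p.1 * (p.2 i : ℝ)) ((2 : ℝ) ^ p.1)

/-- `f` is `η`-quasisymmetric on `E`. -/
def QSOn {d D : ℕ} (η : ℝ → ℝ) (E : Set (Fin d → ℝ))
    (f : (Fin d → ℝ) → (Fin D → ℝ)) : Prop :=
  ∀ x ∈ E, ∀ y ∈ E, ∀ z ∈ E, x ≠ y → x ≠ z → y ≠ z →
    dist (f x) (f y) ≤ η (dist x y / dist x z) * dist (f x) (f z)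

/-- The normalized affine approximation number `ω_f(Q)`. -/
noncomputable def omegaSet {d D : ℕ} (f : (Fin d → ℝ) → (Fin D → ℝ))
    (Q : Set (Fin d → ℝ)) : ℝ :=
  ⨅ A : {p : ((Fin d → ℝ) →L[ℝ] (Fin D → ℝ)) × (Fin D → ℝ) // p.1 ≠ 0},
    Real.sqrt (⨍ x in Q, ‖f x - (A.val.1 x + A.val.2)‖ ^ 2 / (‖A.val.1‖ * Metric.diam Q) ^ 2)

/-!
Write `J A = ∫_Q ‖f - A‖²`, so that the quantity under the infimum is `J A / (‖A'‖² diam(Q)² |Q|)`.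
On a cube, reflecting one coordinate in the midpoint shows
`∫_Q ‖A‖² ≥ ‖A'‖² diam(Q)² |Q| / (12 d²)`. Comparing `A` with the zero map then bounds `‖A'‖`,
and after it the constant term, for every `A` whose normalized error is below `ε²` with
`24 d² ε² < 1`; and `A'` cannot tend to `0` there, since `f` would then be a.e. constant, which
this coercivity also rules out. So the ratio is continuous on a nonempty compact set of affine
maps outside of which it is larger, and it attains its minimum. If `f - A` is not square
integrable for some `A`, the average is the junk value `0` and `A` is already a minimizer.
-/

lemma integral_sq_norm_add_le {α F : Type*} [MeasurableSpace α] [NormedAddCommGroup F]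
    {ν : Measure α} {u v : α → F}
    (hu : Integrable (fun x => ‖u x‖ ^ 2) ν) (hv : Integrable (fun x => ‖v x‖ ^ 2) ν) :
    ∫ x, ‖u x + v x‖ ^ 2 ∂ν ≤ 2 * ∫ x, ‖u x‖ ^ 2 ∂ν + 2 * ∫ x, ‖v x‖ ^ 2 ∂ν := by
  rw [← integral_const_mul, ← integral_const_mul, ← integral_add (hu.const_mul 2) (hv.const_mul 2)]
  refine integral_mono_of_nonneg (.of_forall fun x => by positivity)
    ((hu.const_mul 2).add (hv.const_mul 2)) (.of_forall fun x => ?_)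
  have := norm_add_le (u x) (v x)
  nlinarith [norm_nonneg (u x + v x), sq_nonneg (‖u x‖ - ‖v x‖)]

lemma integral_sq_sub_comp_le {α : Type*} [MeasurableSpace α] {ν : Measure α} {ρ : α ≃ᵐ α}
    (hρ : MeasurePreserving ρ ν ν) {g : α → ℝ} (hg : Integrable (fun x => g x ^ 2) ν) :
    ∫ x, (g x - g (ρ x)) ^ 2 ∂ν ≤ 4 * ∫ x, g x ^ 2 ∂ν := by
  have hgρ : Integrable (fun x => g (ρ x) ^ 2) ν :=
    (hρ.integrable_comp_emb ρ.measurableEmbedding).2 hg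
  have hcomp : ∫ x, g (ρ x) ^ 2 ∂ν = ∫ x, g x ^ 2 ∂ν := hρ.integral_comp' (fun x => g x ^ 2)
  calc ∫ x, (g x - g (ρ x)) ^ 2 ∂ν ≤ ∫ x, (2 * g x ^ 2 + 2 * g (ρ x) ^ 2) ∂ν :=
        integral_mono_of_nonneg (.of_forall fun x => sq_nonneg _)
          ((hg.const_mul 2).add (hgρ.const_mul 2))
          (.of_forall fun x => by nlinarith [sq_nonneg (g x + g (ρ x))])
    _ = 4 * ∫ x, g x ^ 2 ∂ν := by
        rw [integral_add (hg.const_mul 2) (hgρ.const_mul 2), integral_const_mul,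
          integral_const_mul, hcomp]
        ring

lemma exists_forall_div_le_of_isBounded {X : Type*} [MetricSpace X] [ProperSpace X]
    {J w : X → ℝ} (hJ : Continuous J) (hw : Continuous w) (hw0 : ∀ x, 0 ≤ w x)
    (hJ0 : ∀ x, w x = 0 → 0 < J x) {t : ℝ} (hbdd : Bornology.IsBounded {x | J x ≤ t * w x})
    {x₀ : X} (hx₀ : J x₀ < t * w x₀) :
    ∃ x, 0 < w x ∧ ∀ y, 0 < w y → J x / w x ≤ J y / w y := by
  set K := {x | J x ≤ t * w x}
  have hKw : ∀ x ∈ K, 0 < w x := fun x hx => (hw0 x).lt_of_ne fun h => by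
    have := hJ0 x h.symm
    simp only [K, mem_ofPred_eq, ← h, mul_zero] at hx
    linarith
  have hK : IsCompact K := hbdd.isCompact_closure.of_isClosed_subset
    (isClosed_le hJ (continuous_const.mul hw)) subset_closure
  obtain ⟨x, hxK, hmin⟩ := hK.exists_isMinOn ⟨x₀, hx₀.le⟩
    (hJ.continuousOn.div hw.continuousOn fun x hx => (hKw x hx).ne')
  refine ⟨x, hKw x hxK, fun y hy => ?_⟩
  by_cases hyK : y ∈ K
  · exact hmin hyK
  · have hx₀t : J x₀ / w x₀ < t := (div_lt_iff₀ (hKw x₀ hx₀.le)).2 hx₀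
    have hyt : t < J y / w y := (lt_div_iff₀ hy).2 (not_le.1 hyK)
    have hx₀min : J x / w x ≤ J x₀ / w x₀ := hmin (show x₀ ∈ K from hx₀.le)
    linarith

section AffineError

variable {E F : Type*} [NormedAddCommGroup E] [NormedSpace ℝ E] [NormedAddCommGroup F]
  [NormedSpace ℝ F] [MeasurableSpace E] {μ : Measure E}

noncomputable def affineError (μ : Measure E) (f : E → F) (A : (E →L[ℝ] F) × F) : ℝ :=
  ∫ x, ‖f x - (A.1 x + A.2)‖ ^ 2 ∂μ

lemma affineError_nonneg (f : E → F) (A : (E →L[ℝ] F) × F) : 0 ≤ affineError μ f A :=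
  integral_nonneg fun _ => sq_nonneg _

omit [MeasurableSpace E] in
lemma norm_sub_affine_le (f : E → F) (A B : (E →L[ℝ] F) × F) (x : E) :
    ‖f x - (B.1 x + B.2)‖ ≤ ‖f x - (A.1 x + A.2)‖ + dist A B * (‖x‖ + 1) := by
  have hB : f x - (B.1 x + B.2) = (f x - (A.1 x + A.2)) + ((A.1 - B.1) x + (A.2 - B.2)) := by
    simp only [sub_apply]; abel
  have h1 : ‖A.1 - B.1‖ ≤ dist A B := by rw [← dist_eq_norm, Prod.dist_eq]; exact le_max_left ..
  have h2 : ‖A.2 - B.2‖ ≤ dist A B := by rw [← dist_eq_norm, Prod.dist_eq]; exact le_max_right ..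
  calc ‖f x - (B.1 x + B.2)‖
      ≤ ‖f x - (A.1 x + A.2)‖ + (‖A.1 - B.1‖ * ‖x‖ + ‖A.2 - B.2‖) := by
        rw [hB]
        have := norm_add_le ((A.1 - B.1) x) (A.2 - B.2)
        linarith [norm_add_le (f x - (A.1 x + A.2)) ((A.1 - B.1) x + (A.2 - B.2)),
          (A.1 - B.1).le_opNorm x]
    _ ≤ ‖f x - (A.1 x + A.2)‖ + dist A B * (‖x‖ + 1) := by
        gcongr
        nlinarith [norm_nonneg x, norm_nonneg (A.1 - B.1)]

lemma continuous_affineError {R : ℝ} (hR : ∀ᵐ x ∂μ, ‖x‖ ≤ R) [IsFiniteMeasure μ] {f : E → F}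
    (hf : ∀ A : (E →L[ℝ] F) × F, Integrable (fun x => ‖f x - (A.1 x + A.2)‖ ^ 2) μ) :
    Continuous (affineError μ f) := by
  refine continuous_iff_continuousAt.2 fun A => continuousAt_of_dominated
    (.of_forall fun B => (hf B).aestronglyMeasurable)
    (bound := fun x => 2 * ‖f x - (A.1 x + A.2)‖ ^ 2 + 2 * (R + 1) ^ 2) ?_
    (((hf A).const_mul 2).add (integrable_const _)) (.of_forall fun x => by fun_prop)
  filter_upwards [Metric.ball_mem_nhds A one_pos] with B hB
  filter_upwards [hR] with x hx
  have hAB : dist A B * (‖x‖ + 1) ≤ R + 1 := by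
    rw [Metric.mem_ball, dist_comm] at hB
    nlinarith [norm_nonneg x, dist_nonneg (x := A) (y := B)]
  have := norm_sub_affine_le f A B x
  rw [Real.norm_eq_abs, abs_of_nonneg (sq_nonneg _)]
  nlinarith [norm_nonneg (f x - (B.1 x + B.2)), norm_nonneg (f x - (A.1 x + A.2)),
    sq_nonneg (‖f x - (A.1 x + A.2)‖ - (R + 1)), dist_nonneg (x := A) (y := B)]

lemma integrable_sq_norm_sub_affine [Nontrivial (E →L[ℝ] F)] {f : E → F}
    (hf : ∀ A : (E →L[ℝ] F) × F, A.1 ≠ 0 → Integrable (fun x => ‖f x - (A.1 x + A.2)‖ ^ 2) μ)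
    (A : (E →L[ℝ] F) × F) : Integrable (fun x => ‖f x - (A.1 x + A.2)‖ ^ 2) μ := by
  by_cases hA : A.1 ≠ 0
  · exact hf A hA
  push Not at hA
  obtain ⟨L, hL⟩ := exists_ne (0 : E →L[ℝ] F)
  have hshift : ∀ t : ℝ, t ≠ 0 → Integrable (fun x => ‖f x - ((A.1 + t • L) x + A.2)‖ ^ 2) μ :=
    fun t ht => hf (A.1 + t • L, A.2) (by simpa [hA] using smul_ne_zero ht hL)
  have hmeas : AEStronglyMeasurable (fun x => ‖f x - (A.1 x + A.2)‖ ^ 2) μ := by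
    have ht : Filter.Tendsto (fun n : ℕ => 1 / ((n : ℝ) + 1)) Filter.atTop (nhds 0) :=
      tendsto_one_div_add_atTop_nhds_zero_nat
    refine aestronglyMeasurable_of_tendsto_ae Filter.atTop
      (f := fun (n : ℕ) x => ‖f x - ((A.1 + (1 / ((n : ℝ) + 1)) • L) x + A.2)‖ ^ 2)
      (fun n => (hshift _ Nat.one_div_pos_of_nat.ne').aestronglyMeasurable) (.of_forall fun x => ?_)
    have hc : Continuous fun t : ℝ => ‖f x - ((A.1 + t • L) x + A.2)‖ ^ 2 := by fun_prop
    simpa [Function.comp_def] using (hc.tendsto 0).comp ht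
  -- `f - A` is the midpoint of `f - (A + L)` and `f - (A - L)`.
  refine (((hshift 1 one_ne_zero).add (hshift (-1) (by norm_num))).div_const 2).mono' hmeas
    (.of_forall fun x => ?_)
  set u := f x - ((A.1 + (1 : ℝ) • L) x + A.2)
  set v := f x - ((A.1 + (-1 : ℝ) • L) x + A.2)
  have hmid : f x - (A.1 x + A.2) = (1 / 2 : ℝ) • (u + v) := by
    simp only [u, v, add_apply, smul_apply]; module
  rw [Real.norm_of_nonneg (sq_nonneg _), hmid, norm_smul, Real.norm_of_nonneg (by norm_num),
    Pi.add_apply]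
  have := norm_add_le u v
  nlinarith [norm_nonneg (u + v), norm_nonneg u, norm_nonneg v, sq_nonneg (‖u‖ - ‖v‖)]

lemma affineError_zero (A : (E →L[ℝ] F) × F) :
    affineError μ 0 A = ∫ x, ‖A.1 x + A.2‖ ^ 2 ∂μ := by
  simp only [affineError, Pi.zero_apply, zero_sub, norm_neg]

lemma affineError_zero_le {f : E → F}
    (hf : ∀ A : (E →L[ℝ] F) × F, Integrable (fun x => ‖f x - (A.1 x + A.2)‖ ^ 2) μ)
    (A : (E →L[ℝ] F) × F) :
    affineError μ 0 A ≤ 2 * affineError μ f A + 2 * affineError μ f 0 := by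
  have h := integral_sq_norm_add_le (u := fun x => -(f x - (A.1 x + A.2)))
    (v := fun x => f x - ((0 : (E →L[ℝ] F) × F).1 x + (0 : (E →L[ℝ] F) × F).2))
    (by simpa only [norm_neg] using hf A) (hf 0)
  rw [affineError_zero]
  convert h using 4 <;> simp [affineError, norm_sub_rev]

lemma ae_eq_const_of_affineError_eq_zero {f : E → F} {v : F}
    (hf : Integrable (fun x => ‖f x - v‖ ^ 2) μ) (h : affineError μ f (0, v) = 0) :
    f =ᵐ[μ] fun _ => v := by
  simp only [affineError, zero_apply, zero_add] at h
  filter_upwards [(integral_eq_zero_iff_of_nonneg (fun _ => sq_nonneg _) hf).1 h] with x hx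
  simpa [sub_eq_zero] using hx

lemma affineError_of_ae_eq_const {f : E → F} {v : F} (hfv : f =ᵐ[μ] fun _ => v)
    (A : (E →L[ℝ] F) × F) : affineError μ f A = affineError μ 0 (A.1, A.2 - v) := by
  rw [affineError_zero]
  refine integral_congr_ae ?_
  filter_upwards [hfv] with x hx
  rw [hx, ← norm_neg]
  congr 2
  abel

variable [OpensMeasurableSpace E] [IsFiniteMeasure μ] {R : ℝ}

lemma integrable_sq_norm_affine (hR : ∀ᵐ x ∂μ, ‖x‖ ≤ R) (A : (E →L[ℝ] F) × F) :
    Integrable (fun x => ‖A.1 x + A.2‖ ^ 2) μ := by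
  refine Integrable.of_bound (C := (‖A.1‖ * R + ‖A.2‖) ^ 2)
    (by fun_prop : Continuous fun x => ‖A.1 x + A.2‖ ^ 2).aestronglyMeasurable ?_
  filter_upwards [hR] with x hx
  rw [Real.norm_of_nonneg (sq_nonneg _)]
  have := A.1.le_opNorm x
  have := norm_add_le (A.1 x) A.2
  have := mul_le_mul_of_nonneg_left hx (norm_nonneg A.1)
  exact pow_le_pow_left₀ (norm_nonneg _) (by linarith) 2

lemma sq_norm_snd_mul_le (hR : ∀ᵐ x ∂μ, ‖x‖ ≤ R) {A : (E →L[ℝ] F) × F} {M : ℝ}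
    (hM : ‖A.1‖ ≤ M) :
    ‖A.2‖ ^ 2 * μ.real univ ≤ 2 * affineError μ 0 A + 2 * (M * R) ^ 2 * μ.real univ := by
  have hint := (integrable_sq_norm_affine hR A).const_mul 2
  calc ‖A.2‖ ^ 2 * μ.real univ = ∫ _x, ‖A.2‖ ^ 2 ∂μ := by rw [integral_const, smul_eq_mul, mul_comm]
    _ ≤ ∫ x, (2 * ‖A.1 x + A.2‖ ^ 2 + 2 * (M * R) ^ 2) ∂μ :=
        integral_mono_ae (integrable_const _) (hint.add (integrable_const _)) ?_
    _ = 2 * affineError μ 0 A + 2 * (M * R) ^ 2 * μ.real univ := by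
        rw [integral_add hint (integrable_const _), integral_const_mul, integral_const,
          affineError_zero, smul_eq_mul]
        ring
  filter_upwards [hR] with x hx
  have h1 : ‖A.1 x‖ ≤ M * R :=
    (A.1.le_opNorm x).trans (mul_le_mul hM hx (norm_nonneg _) ((norm_nonneg _).trans hM))
  have h2 : ‖A.2‖ ≤ ‖A.1 x + A.2‖ + ‖A.1 x‖ := by
    simpa using norm_sub_le (A.1 x + A.2) (A.1 x)
  nlinarith [norm_nonneg (A.1 x), norm_nonneg A.2, norm_nonneg (A.1 x + A.2),
    sq_nonneg (‖A.1 x + A.2‖ - M * R)]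

lemma isBounded_setOf_affineError_zero_le [NeZero μ] (hR : ∀ᵐ x ∂μ, ‖x‖ ≤ R) (M C : ℝ) :
    Bornology.IsBounded {A : (E →L[ℝ] F) × F | ‖A.1‖ ≤ M ∧ affineError μ 0 A ≤ C} := by
  have hV : 0 < μ.real univ := measureReal_univ_pos
  set N := (2 * C + 2 * (M * R) ^ 2 * μ.real univ) / μ.real univ
  refine isBounded_iff_forall_norm_le.2 ⟨max M √N, fun A ⟨hM, hC⟩ => ?_⟩
  have hN : ‖A.2‖ ^ 2 ≤ N := by
    rw [le_div_iff₀ hV]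
    linarith [sq_norm_snd_mul_le hR hM]
  rw [Prod.norm_def]
  exact max_le_max hM (Real.le_sqrt_of_sq_le hN)

variable [FiniteDimensional ℝ E] [FiniteDimensional ℝ F] [NeZero μ]

theorem exists_forall_affineError_div_le {R : ℝ} (hR : ∀ᵐ x ∂μ, ‖x‖ ≤ R) {f : E → F}
    (hf : ∀ A : (E →L[ℝ] F) × F, Integrable (fun x => ‖f x - (A.1 x + A.2)‖ ^ 2) μ)
    {s κ ε : ℝ} (hs : 0 < s) (hκ : ∀ A : (E →L[ℝ] F) × F, ‖A.1‖ ^ 2 * s ≤ κ * affineError μ 0 A)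
    (hε : 2 * κ * ε ^ 2 < 1) {A₀ : (E →L[ℝ] F) × F}
    (hA₀ : affineError μ f A₀ < ε ^ 2 * (‖A₀.1‖ ^ 2 * s)) :
    ∃ A : (E →L[ℝ] F) × F, A.1 ≠ 0 ∧ ∀ B : (E →L[ℝ] F) × F, B.1 ≠ 0 →
      affineError μ f A / (‖A.1‖ ^ 2 * s) ≤ affineError μ f B / (‖B.1‖ ^ 2 * s) := by
  set J := affineError μ f
  have hw : ∀ A : (E →L[ℝ] F) × F, 0 < ‖A.1‖ ^ 2 * s ↔ A.1 ≠ 0 := fun A => by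
    rw [mul_pos_iff_of_pos_right hs, sq_pos_iff, norm_ne_zero_iff]
  have hA₀w : 0 < ‖A₀.1‖ ^ 2 * s := by
    by_contra h
    have : ‖A₀.1‖ ^ 2 * s = 0 := le_antisymm (not_lt.1 h) (by positivity)
    linarith [affineError_nonneg (μ := μ) f A₀, this ▸ hA₀]
  have hκpos : 0 < κ := pos_of_mul_pos_left (hA₀w.trans_le (hκ A₀)) (affineError_nonneg 0 A₀)
  -- The error of the best constant is positive, as otherwise `f` is a.e. constant and the
  -- normalized error of `A₀` is at least `1 / κ > ε ^ 2`.
  have hJ0 : ∀ A : (E →L[ℝ] F) × F, ‖A.1‖ ^ 2 * s = 0 → 0 < J A := fun A hA => by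
    have hA1 : A.1 = 0 := by simpa [hs.ne'] using hA
    refine (affineError_nonneg f A).lt_of_ne fun h => ?_
    have hfv : f =ᵐ[μ] fun _ => A.2 := ae_eq_const_of_affineError_eq_zero
      (by simpa [hA1] using hf A) (by rw [← hA1]; exact h.symm)
    have := hκ (A₀.1, A₀.2 - A.2)
    rw [← affineError_of_ae_eq_const hfv] at this
    nlinarith [sq_nonneg ε]
  have hbdd : Bornology.IsBounded {A | J A ≤ ε ^ 2 * (‖A.1‖ ^ 2 * s)} := by
    set W := 2 * κ * J 0 / (1 - 2 * κ * ε ^ 2)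
    refine (isBounded_setOf_affineError_zero_le hR √(W / s) (2 * ε ^ 2 * W + 2 * J 0)).subset
      fun A hA => ?_
    have hG := affineError_zero_le hf A
    have hAW : ‖A.1‖ ^ 2 * s ≤ W := by
      rw [le_div_iff₀ (by linarith)]
      nlinarith [hκ A, mem_ofPred.1 hA]
    refine ⟨Real.le_sqrt_of_sq_le ((le_div_iff₀ hs).2 hAW), ?_⟩
    nlinarith [mem_ofPred.1 hA, sq_nonneg ε]
  obtain ⟨A, hAw, hA⟩ := exists_forall_div_le_of_isBounded (continuous_affineError hR hf)
    (by fun_prop) (fun A => by positivity) hJ0 hbdd hA₀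
  exact ⟨A, (hw A).1 hAw, fun B hB => hA B ((hw B).2 hB)⟩

end AffineError

section Cube

variable {d D : ℕ}

lemma integral_Icc_sq_sub_midpoint {s t : ℝ} (hst : s ≤ t) :
    ∫ x in Icc s t, (x - (s + t) / 2) ^ 2 = (t - s) ^ 3 / 12 := by
  rw [integral_Icc_eq_integral_Ioc, ← intervalIntegral.integral_of_le hst,
    intervalIntegral.integral_comp_sub_right (fun x => x ^ 2), integral_pow]
  ring

lemma integral_Icc_pi_sq_sub_midpoint {a c : Fin d → ℝ} (hac : a ≤ c) (i : Fin d) :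
    ∫ x in Icc a c, (x i - (a i + c i) / 2) ^ 2 = (c i - a i) ^ 2 / 12 * volume.real (Icc a c) := by
  classical
  have hrestrict : volume.restrict (Icc a c) =
      Measure.pi fun j => volume.restrict (Icc (a j) (c j)) := by
    rw [← Set.pi_univ_Icc, volume_pi, Measure.restrict_pi_pi]
  have hmap := integral_map (μ := Measure.pi fun j => volume.restrict (Icc (a j) (c j)))
    (φ := Function.eval i) (f := fun t : ℝ => (t - (a i + c i) / 2) ^ 2)
    (measurable_pi_apply i).aemeasurable (by fun_prop)
  rw [hrestrict, ← hmap, Measure.pi_map_eval, integral_smul_measure,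
    integral_Icc_sq_sub_midpoint (hac i), measureReal_def, Real.volume_Icc_pi_toReal hac,
    ← Finset.mul_prod_erase _ _ (Finset.mem_univ i)]
  simp only [Measure.restrict_apply_univ, Real.volume_Icc, ENNReal.toReal_prod, smul_eq_mul,
    ENNReal.toReal_ofReal (sub_nonneg.2 (hac _))]
  ring

def reflectCoord (a c : Fin d → ℝ) (i : Fin d) : (Fin d → ℝ) ≃ᵐ (Fin d → ℝ) :=
  MeasurableEquiv.piCongrRight fun j =>
    if j = i then MeasurableEquiv.subLeft (a i + c i) else MeasurableEquiv.refl ℝ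

lemma reflectCoord_apply (a c : Fin d → ℝ) (i : Fin d) (x : Fin d → ℝ) :
    reflectCoord a c i x = Function.update x i (a i + c i - x i) := by
  ext j
  by_cases hj : j = i
  · subst hj; simp [reflectCoord, MeasurableEquiv.piCongrRight]; rfl
  · simp [reflectCoord, MeasurableEquiv.piCongrRight, hj]

lemma measurePreserving_reflectCoord (a c : Fin d → ℝ) (i : Fin d) :
    MeasurePreserving (reflectCoord a c i) (volume.restrict (Icc a c))
      (volume.restrict (Icc a c)) := by
  have hvol : MeasurePreserving (reflectCoord a c i) volume volume := by
    refine volume_preserving_pi fun j => ?_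
    by_cases hj : j = i
    · simp only [hj, if_true]; exact volume.measurePreserving_sub_left _
    · simp only [hj, if_false]; exact MeasurePreserving.id volume
  have hpre : reflectCoord a c i ⁻¹' Icc a c = Icc a c := by
    ext x
    simp only [mem_preimage, reflectCoord_apply, mem_Icc, Pi.le_def]
    refine ⟨fun h => ⟨fun j => ?_, fun j => ?_⟩, fun h => ⟨fun j => ?_, fun j => ?_⟩⟩ <;>
    · by_cases hj : j = i
      · subst hj; have := h.1 j; have := h.2 j; simp at *; linarith
      · have := h.1 j; have := h.2 j; simp [hj] at *; assumption
  simpa [hpre] using hvol.restrict_preimage_emb (reflectCoord a c i).measurableEmbedding (Icc a c)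

lemma sub_reflectCoord (a c : Fin d → ℝ) (i : Fin d) (x : Fin d → ℝ) :
    x - reflectCoord a c i x = (2 * (x i - (a i + c i) / 2)) • Pi.single i (1 : ℝ) := by
  ext j
  by_cases hj : j = i
  · subst hj; simp [reflectCoord_apply]; ring
  · simp [reflectCoord_apply, hj]

lemma sq_apply_single_mul_le_integral {a c : Fin d → ℝ} (hac : a ≤ c) (i : Fin d)
    (ψ : (Fin d → ℝ) →L[ℝ] ℝ) (β : ℝ) :
    ψ (Pi.single i 1) ^ 2 * ((c i - a i) ^ 2 / 12 * volume.real (Icc a c)) ≤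
      ∫ x in Icc a c, (ψ x + β) ^ 2 := by
  have hint : Integrable (fun x => (ψ x + β) ^ 2) (volume.restrict (Icc a c)) :=
    (by fun_prop : Continuous fun x => (ψ x + β) ^ 2).integrableOn_Icc
  have key := integral_sq_sub_comp_le (measurePreserving_reflectCoord a c i) hint
  have hdiff : ∀ x, (ψ x + β) - (ψ (reflectCoord a c i x) + β) =
      2 * ψ (Pi.single i 1) * (x i - (a i + c i) / 2) := by
    intro x
    rw [add_sub_add_right_eq_sub, ← map_sub, sub_reflectCoord, map_smul, smul_eq_mul]
    ring
  simp_rw [hdiff, mul_pow, integral_const_mul] at key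
  rw [← integral_Icc_pi_sq_sub_midpoint hac i]
  nlinarith

lemma norm_apply_single_sq_mul_le_integral {a c : Fin d → ℝ} (hac : a ≤ c) (i : Fin d)
    (L : (Fin d → ℝ) →L[ℝ] (Fin D → ℝ)) (b : Fin D → ℝ) :
    ‖L (Pi.single i 1)‖ ^ 2 * ((c i - a i) ^ 2 / 12 * volume.real (Icc a c)) ≤
      ∫ x in Icc a c, ‖L x + b‖ ^ 2 := by
  set K := (c i - a i) ^ 2 / 12 * volume.real (Icc a c)
  set I := ∫ x in Icc a c, ‖L x + b‖ ^ 2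
  have hK : 0 ≤ K := by positivity
  have hint : Integrable (fun x => ‖L x + b‖ ^ 2) (volume.restrict (Icc a c)) :=
    (by fun_prop : Continuous fun x => ‖L x + b‖ ^ 2).integrableOn_Icc
  have hcoord : ∀ j, (L (Pi.single i 1) j) ^ 2 * K ≤ I := fun j => by
    refine (sq_apply_single_mul_le_integral hac i ((ContinuousLinearMap.proj j).comp L) (b j)).trans
      (integral_mono_of_nonneg (.of_forall fun _ => sq_nonneg _) hint (.of_forall fun x => ?_))
    simpa [sq_abs] using pow_le_pow_left₀ (abs_nonneg _) (norm_le_pi_norm (L x + b) j) 2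
  rcases hK.eq_or_lt with hK0 | hKpos
  · rw [← hK0, mul_zero]; exact integral_nonneg fun _ => sq_nonneg _
  rw [← le_div_iff₀ hKpos, ← Real.le_sqrt (norm_nonneg _) (by positivity)]
  refine (pi_norm_le_iff_of_nonneg (Real.sqrt_nonneg _)).2 fun j => ?_
  exact Real.abs_le_sqrt ((le_div_iff₀ hKpos).2 (hcoord j))

lemma opNorm_le_card_mul {F : Type*} [NormedAddCommGroup F] [NormedSpace ℝ F]
    (L : (Fin d → ℝ) →L[ℝ] F) {T : ℝ} (hT : 0 ≤ T) (h : ∀ i, ‖L (Pi.single i 1)‖ ≤ T) :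
    ‖L‖ ≤ d * T := by
  refine L.opNorm_le_bound (by positivity) fun x => ?_
  have hx : x = ∑ i, x i • Pi.single i (1 : ℝ) := by ext j; simp [Pi.single_apply]
  calc ‖L x‖ = ‖∑ i, x i • L (Pi.single i 1)‖ := by
        conv_lhs => rw [hx]
        simp only [map_sum, map_smul]
    _ ≤ ∑ i, ‖x i • L (Pi.single i 1)‖ := norm_sum_le _ _
    _ ≤ ∑ _i : Fin d, ‖x‖ * T := Finset.sum_le_sum fun i _ => by
        rw [norm_smul]
        exact mul_le_mul (norm_le_pi_norm x i) (h i) (norm_nonneg _) (norm_nonneg _)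
    _ = d * T * ‖x‖ := by simp; ring

lemma le_add_const {a : Fin d → ℝ} {ℓ : ℝ} (hℓ : 0 ≤ ℓ) : a ≤ fun i => a i + ℓ :=
  fun _ => le_add_of_nonneg_right hℓ

lemma opNorm_sq_mul_le_integral_cube (a : Fin d → ℝ) {ℓ : ℝ} (hℓ : 0 ≤ ℓ)
    (L : (Fin d → ℝ) →L[ℝ] (Fin D → ℝ)) (b : Fin D → ℝ) :
    ‖L‖ ^ 2 * (ℓ ^ 2 * volume.real (cube a ℓ)) ≤ 12 * d ^ 2 * ∫ x in cube a ℓ, ‖L x + b‖ ^ 2 := by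
  set K := ℓ ^ 2 / 12 * volume.real (cube a ℓ)
  set I := ∫ x in cube a ℓ, ‖L x + b‖ ^ 2
  have hrow : ∀ i, ‖L (Pi.single i 1)‖ ^ 2 * K ≤ I := fun i => by
    have h := norm_apply_single_sq_mul_le_integral (le_add_const (a := a) hℓ) i L b
    simp only [add_sub_cancel_left] at h
    exact h
  have hscale : ‖L‖ ^ 2 * (ℓ ^ 2 * volume.real (cube a ℓ)) = 12 * (‖L‖ ^ 2 * K) := by ring
  rcases (by positivity : 0 ≤ K).eq_or_lt with hK0 | hKpos
  · rw [hscale, ← hK0, mul_zero, mul_zero]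
    exact mul_nonneg (by positivity) (integral_nonneg fun _ => sq_nonneg _)
  have hL : ‖L‖ ≤ d * √(I / K) := opNorm_le_card_mul L (Real.sqrt_nonneg _) fun i =>
    Real.le_sqrt_of_sq_le ((le_div_iff₀ hKpos).2 (hrow i))
  have hL2 : ‖L‖ ^ 2 * K ≤ d ^ 2 * I := by
    calc ‖L‖ ^ 2 * K ≤ (d * √(I / K)) ^ 2 * K := by gcongr
      _ = d ^ 2 * I := by
          rw [mul_pow, Real.sq_sqrt (div_nonneg (integral_nonneg fun _ => sq_nonneg _) hKpos.le),
            mul_assoc, div_mul_cancel₀ _ hKpos.ne']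
  rw [hscale]
  linarith

lemma measureReal_cube (a : Fin d → ℝ) {ℓ : ℝ} (hℓ : 0 ≤ ℓ) :
    volume.real (cube a ℓ) = ℓ ^ d := by
  rw [measureReal_def, cube, Real.volume_Icc_pi_toReal (le_add_const hℓ)]
  simp

lemma diam_cube (hd : 1 ≤ d) (a : Fin d → ℝ) {ℓ : ℝ} (hℓ : 0 ≤ ℓ) : diam (cube a ℓ) = ℓ := by
  refine le_antisymm (diam_le_of_forall_dist_le hℓ fun x hx y hy => ?_) ?_
  · refine (dist_pi_le_iff hℓ).2 fun i => ?_
    rw [Real.dist_eq, abs_le]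
    constructor <;> linarith [hx.1 i, hx.2 i, hy.1 i, hy.2 i]
  · have hc : (fun i => a i + ℓ) ∈ cube a ℓ := ⟨le_add_const hℓ, le_rfl⟩
    calc ℓ = dist (a ⟨0, hd⟩) (a ⟨0, hd⟩ + ℓ) := by simp [abs_of_nonneg hℓ]
      _ ≤ dist a (fun i => a i + ℓ) := dist_le_pi_dist a (fun i => a i + ℓ) ⟨0, hd⟩
      _ ≤ diam (cube a ℓ) :=
          dist_le_diam_of_mem isCompact_Icc.isBounded ⟨le_rfl, le_add_const hℓ⟩ hc

end Cube

section Omega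

variable {d D : ℕ}

noncomputable def normalizedAffineError (f : (Fin d → ℝ) → (Fin D → ℝ)) (Q : Set (Fin d → ℝ))
    (A : ((Fin d → ℝ) →L[ℝ] (Fin D → ℝ)) × (Fin D → ℝ)) : ℝ :=
  ⨍ x in Q, ‖f x - (A.1 x + A.2)‖ ^ 2 / (‖A.1‖ * diam Q) ^ 2

variable {f : (Fin d → ℝ) → (Fin D → ℝ)} {Q : Set (Fin d → ℝ)}

lemma normalizedAffineError_eq (A : ((Fin d → ℝ) →L[ℝ] (Fin D → ℝ)) × (Fin D → ℝ)) :
    normalizedAffineError f Q A =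
      affineError (volume.restrict Q) f A / (‖A.1‖ ^ 2 * (diam Q ^ 2 * volume.real Q)) := by
  rw [normalizedAffineError, setAverage_eq, integral_div, affineError, smul_eq_mul]
  field_simp

lemma omegaSet_eq_iInf : omegaSet f Q =
    ⨅ A : {A : ((Fin d → ℝ) →L[ℝ] (Fin D → ℝ)) × (Fin D → ℝ) // A.1 ≠ 0},
      √(normalizedAffineError f Q A.1) := rfl

lemma normalizedAffineError_nonneg (A : ((Fin d → ℝ) →L[ℝ] (Fin D → ℝ)) × (Fin D → ℝ)) :
    0 ≤ normalizedAffineError f Q A := by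
  rw [normalizedAffineError_eq]
  exact div_nonneg (affineError_nonneg f A) (by positivity)

lemma omegaSet_sq_eq_of_forall_le {A : ((Fin d → ℝ) →L[ℝ] (Fin D → ℝ)) × (Fin D → ℝ)}
    (hA : A.1 ≠ 0) (hmin : ∀ B : ((Fin d → ℝ) →L[ℝ] (Fin D → ℝ)) × (Fin D → ℝ), B.1 ≠ 0 →
      normalizedAffineError f Q A ≤ normalizedAffineError f Q B) :
    omegaSet f Q ^ 2 = normalizedAffineError f Q A := by
  set g := fun B : {B : ((Fin d → ℝ) →L[ℝ] (Fin D → ℝ)) × (Fin D → ℝ) // B.1 ≠ 0} =>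
    √(normalizedAffineError f Q B.1)
  have : Nonempty {B : ((Fin d → ℝ) →L[ℝ] (Fin D → ℝ)) × (Fin D → ℝ) // B.1 ≠ 0} := ⟨⟨A, hA⟩⟩
  have hbdd : BddBelow (range g) := ⟨0, by rintro _ ⟨B, rfl⟩; exact Real.sqrt_nonneg _⟩
  have hω : omegaSet f Q = √(normalizedAffineError f Q A) :=
    le_antisymm (ciInf_le hbdd ⟨A, hA⟩) (le_ciInf fun B => Real.sqrt_le_sqrt (hmin B.1 B.2))
  rw [hω, Real.sq_sqrt (normalizedAffineError_nonneg A)]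

lemma exists_normalizedAffineError_lt [Nontrivial ((Fin d → ℝ) →L[ℝ] (Fin D → ℝ))] {ε : ℝ}
    (hω : omegaSet f Q < ε) : ∃ A : ((Fin d → ℝ) →L[ℝ] (Fin D → ℝ)) × (Fin D → ℝ),
      A.1 ≠ 0 ∧ normalizedAffineError f Q A < ε ^ 2 := by
  obtain ⟨L, hL⟩ := exists_ne (0 : (Fin d → ℝ) →L[ℝ] (Fin D → ℝ))
  have : Nonempty {A : ((Fin d → ℝ) →L[ℝ] (Fin D → ℝ)) × (Fin D → ℝ) // A.1 ≠ 0} := ⟨⟨(L, 0), hL⟩⟩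
  rw [omegaSet_eq_iInf] at hω
  obtain ⟨⟨A, hA⟩, hlt⟩ := exists_lt_of_ciInf_lt hω
  exact ⟨A, hA, (Real.sqrt_lt' ((Real.sqrt_nonneg _).trans_lt hlt)).1 hlt⟩

end Omega

theorem exists_omegaSet_cube_sq_eq {d D : ℕ} (hd : 1 ≤ d) (hD : 1 ≤ D) (a : Fin d → ℝ) {ℓ : ℝ}
    (hℓ : 0 < ℓ) (f : (Fin d → ℝ) → (Fin D → ℝ)) (hω : omegaSet f (cube a ℓ) < 1 / (5 * d)) :
    ∃ (L : (Fin d → ℝ) →L[ℝ] (Fin D → ℝ)) (b : Fin D → ℝ), L ≠ 0 ∧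
      omegaSet f (cube a ℓ) ^ 2 =
        ⨍ x in cube a ℓ, ‖f x - (L x + b)‖ ^ 2 / (‖L‖ * diam (cube a ℓ)) ^ 2 := by
  have : NeZero d := ⟨by omega⟩
  have : NeZero D := ⟨by omega⟩
  set Q := cube a ℓ
  have hV : volume.real Q = ℓ ^ d := measureReal_cube a hℓ.le
  have hdiam : diam Q = ℓ := diam_cube hd a hℓ.le
  have : IsFiniteMeasure (volume.restrict Q) :=
    isFiniteMeasure_restrict.2 isCompact_Icc.measure_ne_top
  have : NeZero (volume.restrict Q) := ⟨fun h => by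
    have := congrArg (fun μ : Measure (Fin d → ℝ) => μ.real univ) h
    simp only [measureReal_restrict_apply_univ, hV, measureReal_zero, Pi.zero_apply] at this
    exact (pow_pos hℓ d).ne' this⟩
  obtain ⟨R, hR⟩ := isCompact_Icc.isBounded.exists_norm_le (s := Q)
  obtain ⟨A₀, hA₀, hA₀lt⟩ := exists_normalizedAffineError_lt hω
  suffices ∃ A, A.1 ≠ 0 ∧ ∀ B, B.1 ≠ 0 →
      normalizedAffineError f Q A ≤ normalizedAffineError f Q B by
    obtain ⟨A, hA, hmin⟩ := this
    exact ⟨A.1, A.2, hA, omegaSet_sq_eq_of_forall_le hA hmin⟩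
  by_cases hint : ∀ A : ((Fin d → ℝ) →L[ℝ] (Fin D → ℝ)) × (Fin D → ℝ), A.1 ≠ 0 →
      Integrable (fun x => ‖f x - (A.1 x + A.2)‖ ^ 2) (volume.restrict Q)
  · simp_rw [normalizedAffineError_eq, hdiam] at hA₀lt ⊢
    have hs : 0 < ℓ ^ 2 * volume.real Q := by rw [hV]; positivity
    refine exists_forall_affineError_div_le (μ := volume.restrict Q)
      (ae_restrict_of_forall_mem measurableSet_Icc hR) (integrable_sq_norm_sub_affine hint) hs
      (κ := 12 * d ^ 2) (fun A => ?_) ?_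
      ((div_lt_iff₀ (mul_pos (pow_pos (norm_pos_iff.2 hA₀) 2) hs)).1 hA₀lt)
    · rw [affineError_zero]; exact opNorm_sq_mul_le_integral_cube a hℓ.le A.1 A.2
    · field_simp; norm_num
  -- Otherwise the normalized error of some nonconstant `A` is a junk `0`.
  push Not at hint
  obtain ⟨A, hA, hA'⟩ := hint
  refine ⟨A, hA, fun B _ => ?_⟩
  rw [normalizedAffineError_eq, affineError, integral_undef hA', zero_div]
  exact normalizedAffineError_nonneg B

theorem omega_inf_attained_general (d : ℕ) (hd : 1 ≤ d)
    (η : ℝ → ℝ) :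
    ∃ ε' : ℝ, 0 < ε' ∧
      ∀ (D : ℕ), d ≤ D →
      ∀ (p : ℤ × (Fin d → ℤ)) (f : (Fin d → ℝ) → (Fin D → ℝ)),
        QSOn η (dc p) f → omegaSet f (dc p) < ε' →
        ∃ (L : (Fin d → ℝ) →L[ℝ] (Fin D → ℝ)) (b : Fin D → ℝ), L ≠ 0 ∧
          omegaSet f (dc p) ^ 2 =
            ⨍ x in dc p, ‖f x - (L x + b)‖ ^ 2 / (‖L‖ * Metric.diam (dc p)) ^ 2 :=
  ⟨1 / (5 * d), by positivity, fun _ hdD _ f _ hω =>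
    exists_omegaSet_cube_sq_eq hd (hd.trans hdD) _ (zpow_pos two_pos _) f hω⟩

/-- If `f : Q → ℝ^D` is `η`-quasisymmetric on a dyadic cube `Q` and `ω_f(Q) < ε'(η,d)`, then
the infimum defining `ω_f(Q)` is attained by a nonconstant affine map. -/
theorem omega_inf_attained (d : ℕ) (hd : 1 ≤ d)
    (η : ℝ → ℝ) (hη : StrictMonoOn η (Set.Ioi 0) ∧ Set.BijOn η (Set.Ioi 0) (Set.Ioi 0)) :
    ∃ ε' : ℝ, 0 < ε' ∧
      ∀ (D : ℕ), d ≤ D →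
      ∀ (p : ℤ × (Fin d → ℤ)) (f : (Fin d → ℝ) → (Fin D → ℝ)),
        QSOn η (dc p) f → omegaSet f (dc p) < ε' →
        ∃ (L : (Fin d → ℝ) →L[ℝ] (Fin D → ℝ)) (b : Fin D → ℝ), L ≠ 0 ∧
          omegaSet f (dc p) ^ 2 =
            ⨍ x in dc p, ‖f x - (L x + b)‖ ^ 2 / (‖L‖ * Metric.diam (dc p)) ^ 2 :=
  omega_inf_attained_general d hd η
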